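/- Fix integers a, b ≥ 1 and real numbers ν, β₁, β₂, and let F and D_k be as in the context. Then ∑_{k=1}^{a} ( C(a,k) / C(a+b,k) ) · D_k(β₁) · F(a−k, b) = ∑_{l₁=1}^{a} ∑_{k₁=1}^{l₁} ∑_{l₂=1}^{b} ∑_{k₂=1}^{l₂} (−1)^{k₁+k₂−1} · ( (k₁+k₂−2)! / (a+b)! ) · c(a, l₁) S(l₁, k₁) c(b, l₂) S(l₂, k₂) · ν^{l₁+l₂−1} · β₁^{k₁} β₂^{k₂} · ( b + (a+b)(k₁−1) ). -/
import Mathlib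


/-- Unsigned Stirling numbers of the first kind, defined by `c(0,0) = 1`,
`c(n,k) = 0` when `k > n` or (`n ≥ 1` and `k = 0`), and
`c(n+1,k) = n·c(n,k) + c(n,k-1)`. -/
def stirling1 : ℕ → ℕ → ℕ
  | 0, 0 => 1
  | 0, _ + 1 => 0
  | _ + 1, 0 => 0
  | n + 1, k + 1 => n * stirling1 n (k + 1) + stirling1 n k

/-- Stirling numbers of the second kind, defined by `S(0,0) = 1`,
`S(n,k) = 0` when `k > n` or (`n ≥ 1` and `k = 0`), and
`S(n+1,k) = k·S(n,k) + S(n,k-1)`. -/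
def stirling2 : ℕ → ℕ → ℕ
  | 0, 0 => 1
  | 0, _ + 1 => 0
  | _ + 1, 0 => 0
  | n + 1, k + 1 => (k + 1) * stirling2 n (k + 1) + stirling2 n k

/-- The Bessel-spider factor
`D_k(β) = -(β/k!) ∑_{j=1}^{k} c(k,j) ν^j` (eq. (25) of the paper). -/
noncomputable def besselD (ν : ℝ) (k : ℕ) (β : ℝ) : ℝ :=
  -(β / (k.factorial : ℝ)) * ∑ j ∈ Finset.Icc 1 k, (stirling1 k j : ℝ) * ν ^ j

/-- The explicit joint-moment expressions for the Bessel spider,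
`F(a,b) = E₀[(A₁^{(1)})^a (A₁^{(2)})^b]` (equations (25) and (26) of the paper):
`F(0,0) = 1`; for `a ≥ 1`,
`F(a,0) = ∑_{l=1}^{a} ∑_{k=1}^{l} (-1)^{k-1} ((k-1)!/(a-1)!) c(a,l) S(l,k) ν^{l-1} β₁^k`
(and symmetrically for `F(0,b)` with `β₂`); and for `a, b ≥ 1`,
`F(a,b) = ∑_{l₁=1}^{a} ∑_{k₁=1}^{l₁} ∑_{l₂=1}^{b} ∑_{k₂=1}^{l₂} (-1)^{k₁+k₂-1}
  ((k₁+k₂-1)!/(a+b-1)!) c(a,l₁) S(l₁,k₁) c(b,l₂) S(l₂,k₂) ν^{l₁+l₂-1} β₁^{k₁} β₂^{k₂}`. -/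
noncomputable def besselF (ν β₁ β₂ : ℝ) : ℕ → ℕ → ℝ
  | 0, 0 => 1
  | a + 1, 0 =>
      ∑ l ∈ Finset.Icc 1 (a + 1), ∑ k ∈ Finset.Icc 1 l,
        (-1 : ℝ) ^ (k - 1) * (((k - 1).factorial : ℝ) / (((a + 1) - 1).factorial : ℝ)) *
          (stirling1 (a + 1) l : ℝ) * (stirling2 l k : ℝ) * ν ^ (l - 1) * β₁ ^ k
  | 0, b + 1 =>
      ∑ l ∈ Finset.Icc 1 (b + 1), ∑ k ∈ Finset.Icc 1 l,
        (-1 : ℝ) ^ (k - 1) * (((k - 1).factorial : ℝ) / (((b + 1) - 1).factorial : ℝ)) *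
          (stirling1 (b + 1) l : ℝ) * (stirling2 l k : ℝ) * ν ^ (l - 1) * β₂ ^ k
  | a + 1, b + 1 =>
      ∑ l₁ ∈ Finset.Icc 1 (a + 1), ∑ k₁ ∈ Finset.Icc 1 l₁,
        ∑ l₂ ∈ Finset.Icc 1 (b + 1), ∑ k₂ ∈ Finset.Icc 1 l₂,
          (-1 : ℝ) ^ (k₁ + k₂ - 1) *
            (((k₁ + k₂ - 1).factorial : ℝ) / (((a + 1) + (b + 1) - 1).factorial : ℝ)) *
            (stirling1 (a + 1) l₁ : ℝ) * (stirling2 l₁ k₁ : ℝ) *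
            (stirling1 (b + 1) l₂ : ℝ) * (stirling2 l₂ k₂ : ℝ) *
            ν ^ (l₁ + l₂ - 1) * β₁ ^ k₁ * β₂ ^ k₂

lemma stirling1_eq_zero_of_lt : ∀ {n k : ℕ}, n < k → stirling1 n k = 0 := by
  intro n
  induction n with
  | zero => intro k hk; match k, hk with | k+1, _ => rfl
  | succ n ih =>
    intro k hk
    match k, hk with
    | k+1, hk =>
      have h1 : n < k + 1 := by omega
      have h2 : n < k := by omega
      simp [stirling1, ih h1, ih h2]

lemma stirling2_eq_zero_of_lt : ∀ {n k : ℕ}, n < k → stirling2 n k = 0 := by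
  intro n
  induction n with
  | zero => intro k hk; match k, hk with | k+1, _ => rfl
  | succ n ih =>
    intro k hk
    match k, hk with
    | k+1, hk =>
      have h1 : n < k + 1 := by omega
      have h2 : n < k := by omega
      simp [stirling2, ih h1, ih h2]

lemma stirling1_zero_right : ∀ {n : ℕ}, 1 ≤ n → stirling1 n 0 = 0 := by
  intro n h; match n, h with | n+1, _ => rfl

lemma stirling2_zero_right : ∀ {n : ℕ}, 1 ≤ n → stirling2 n 0 = 0 := by
  intro n h; match n, h with | n+1, _ => rfl

open Finset in
lemma idA : ∀ (a j m : ℕ),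
    ∑ k ∈ range (a + 1), a.choose k * stirling1 k j * stirling1 (a - k) m
      = (j + m).choose j * stirling1 a (j + m) := by
  intro a
  induction a with
  | zero =>
    intro j m
    cases j <;> cases m <;> simp [stirling1]
  | succ a ih =>
    intro j m
    match j, m with
    | 0, m =>
      rw [Finset.sum_eq_single 0]
      · simp [stirling1]
      · intro k _ hk
        match k, hk with
        | k+1, _ => simp [stirling1_zero_right]
      · simp
    | j+1, 0 =>
      rw [Finset.sum_eq_single (a+1)]
      · simp [stirling1]
      · intro k hk hk'
        have : 1 ≤ a + 1 - k := by
          simp only [mem_range] at hk; omega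
        simp [stirling1_zero_right this]
      · simp
    | j+1, m+1 =>
      have e1 : ∑ k ∈ range (a + 2),
          (a+1).choose k * stirling1 k (j+1) * stirling1 (a + 1 - k) (m+1)
          = ∑ i ∈ range (a + 1),
            (a.choose i + a.choose (i+1)) * stirling1 (i+1) (j+1) * stirling1 (a - i) (m+1) := by
        rw [Finset.sum_range_succ']
        simp [stirling1, Nat.choose_succ_succ]
      have e2 : ∀ i ∈ range (a+1),
          (a.choose i + a.choose (i+1)) * stirling1 (i+1) (j+1) * stirling1 (a - i) (m+1)
          = (i * (a.choose i * stirling1 i (j+1) * stirling1 (a - i) (m+1))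
              + a.choose i * stirling1 i j * stirling1 (a - i) (m+1))
            + a.choose (i+1) * stirling1 (i+1) (j+1) * stirling1 (a - i) (m+1) := by
        intro i _
        simp only [stirling1]
        ring
      have e3 : ∑ i ∈ range (a+1),
          a.choose (i+1) * stirling1 (i+1) (j+1) * stirling1 (a - i) (m+1)
          = ∑ k ∈ range (a+1),
            a.choose k * stirling1 k (j+1) * stirling1 (a + 1 - k) (m+1) := by
        have h := Finset.sum_range_succ' (fun k => a.choose k * stirling1 k (j+1) * stirling1 (a+1-k) (m+1)) (a+1)
        rw [Finset.sum_range_succ] at h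
        simp only [Nat.choose_succ_self, Nat.succ_sub_succ, Nat.sub_self, zero_mul, mul_zero,
          add_zero, Nat.choose_zero_right, one_mul] at h
        rw [stirling1_eq_zero_of_lt (Nat.succ_pos j), zero_mul, add_zero] at h
        exact h.symm
      have e4 : ∀ k ∈ range (a+1),
          a.choose k * stirling1 k (j+1) * stirling1 (a + 1 - k) (m+1)
          = ((a - k) * (a.choose k * stirling1 k (j+1) * stirling1 (a - k) (m+1))
              + a.choose k * stirling1 k (j+1) * stirling1 (a - k) m) := by
        intro k hk
        have hk' : k ≤ a := by simp only [mem_range] at hk; omega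
        have : a + 1 - k = (a - k) + 1 := by omega
        rw [this]
        simp only [stirling1]
        ring
      rw [e1, Finset.sum_congr rfl e2]
      rw [Finset.sum_add_distrib, Finset.sum_add_distrib, e3, Finset.sum_congr rfl e4,
        Finset.sum_add_distrib]
      have e5 : (∑ i ∈ range (a+1), i * (a.choose i * stirling1 i (j+1) * stirling1 (a - i) (m+1)))
          + (∑ i ∈ range (a+1), (a - i) * (a.choose i * stirling1 i (j+1) * stirling1 (a - i) (m+1)))
          = a * ∑ i ∈ range (a+1), a.choose i * stirling1 i (j+1) * stirling1 (a - i) (m+1) := by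
        rw [← Finset.sum_add_distrib, Finset.mul_sum]
        refine Finset.sum_congr rfl ?_
        intro i hi
        have : i ≤ a := by simp only [mem_range] at hi; omega
        have : i + (a - i) = a := by omega
        rw [← add_mul, this]
      have goal1 := ih (j+1) (m+1)
      have goal2 := ih j (m+1)
      have goal3 := ih (j+1) m
      -- rearrange
      have : (∑ i ∈ range (a+1), i * (a.choose i * stirling1 i (j+1) * stirling1 (a - i) (m+1)))
          + (∑ i ∈ range (a+1), a.choose i * stirling1 i j * stirling1 (a - i) (m+1))
          + ((∑ i ∈ range (a+1), (a - i) * (a.choose i * stirling1 i (j+1) * stirling1 (a - i) (m+1)))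
          + (∑ i ∈ range (a+1), a.choose i * stirling1 i (j+1) * stirling1 (a - i) m))
          = a * ((j+1+(m+1)).choose (j+1) * stirling1 a (j+1+(m+1)))
            + ((j+(m+1)).choose j * stirling1 a (j+(m+1))
            + ((j+1+m).choose (j+1) * stirling1 a (j+1+m))) := by
        rw [show ∀ x y z w : ℕ, x + y + (z + w) = (x + z) + (y + w) by intros; omega]
        rw [e5, goal1, goal2, goal3]
      rw [this]
      have h1 : j + 1 + (m+1) = (j + m + 1) + 1 := by omega
      have h2 : j + (m+1) = j + m + 1 := by omega
      have h3 : j + 1 + m = j + m + 1 := by omega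
      rw [h1, h2, h3]
      have h4 : stirling1 (a+1) (j+m+1+1) = a * stirling1 a (j+m+1+1) + stirling1 a (j+m+1) := rfl
      rw [h4]
      have h5 : (j+m+1+1).choose (j+1) = (j+m+1).choose j + (j+m+1).choose (j+1) := by
        exact Nat.choose_succ_succ _ _
      rw [h5]
      ring

open Finset in
lemma idB (a j m : ℕ) :
    ∑ k ∈ range (a + 1), k * (a.choose k * stirling1 k (j+1) * stirling1 (a - k) m)
      = a * ((j + m).choose j * stirling1 a (j + 1 + m)) := by
  induction a with
  | zero => simp
  | succ a ih =>
    rw [Finset.sum_range_succ']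
    simp only [zero_mul, add_zero]
    have e1 : ∀ i ∈ range (a+1),
        (i+1) * ((a+1).choose (i+1) * stirling1 (i+1) (j+1) * stirling1 (a + 1 - (i+1)) m)
        = (a+1) * (i * (a.choose i * stirling1 i (j+1) * stirling1 (a - i) m)
            + a.choose i * stirling1 i j * stirling1 (a - i) m) := by
      intro i _
      have hc : (a+1).choose (i+1) * (i+1) = (a+1) * a.choose i := by
        rw [← Nat.add_one_mul_choose_eq]
      have hs : stirling1 (i+1) (j+1) = i * stirling1 i (j+1) + stirling1 i j := rfl
      have hd : a + 1 - (i + 1) = a - i := by omega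
      rw [hd, hs]
      calc (i+1) * ((a+1).choose (i+1) * (i * stirling1 i (j+1) + stirling1 i j) * stirling1 (a-i) m)
          = ((a+1).choose (i+1) * (i+1)) * ((i * stirling1 i (j+1) + stirling1 i j) * stirling1 (a-i) m) := by ring
        _ = ((a+1) * a.choose i) * ((i * stirling1 i (j+1) + stirling1 i j) * stirling1 (a-i) m) := by rw [hc]
        _ = (a+1) * (i * (a.choose i * stirling1 i (j+1) * stirling1 (a - i) m)
            + a.choose i * stirling1 i j * stirling1 (a - i) m) := by ring
    rw [Finset.sum_congr rfl e1, ← Finset.mul_sum, Finset.sum_add_distrib, ih, idA a j m]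
    have : stirling1 (a+1) (j+1+m) = a * stirling1 a (j+1+m) + stirling1 a (j+m) := by
      rw [show j+1+m = (j+m)+1 by omega]
      rfl
    rw [this]
    ring

open Finset in
lemma sum_Icc_one {M : Type*} [AddCommMonoid M] (f : ℕ → M) (n : ℕ) :
    ∑ j ∈ Icc 1 n, f j = ∑ i ∈ range n, f (i + 1) := by
  rw [← Finset.Ico_add_one_right_eq_Icc, Finset.sum_Ico_eq_sum_range]
  simp [add_comm]

open Finset in
lemma idD : ∀ (n t : ℕ), ∑ j ∈ range (n + 1), n.choose j * stirling2 j t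
    = stirling2 (n + 1) (t + 1) := by
  intro n
  induction n with
  | zero =>
    intro t
    have : stirling2 1 (t+1) = (t+1) * stirling2 0 (t+1) + stirling2 0 t := rfl
    rw [this]
    cases t <;> simp [stirling2, stirling2_eq_zero_of_lt]
  | succ n ih =>
    intro t
    rw [Finset.sum_range_succ']
    have e1 : ∀ i ∈ range (n+1),
        (n+1).choose (i+1) * stirling2 (i+1) t
        = n.choose i * stirling2 (i+1) t + n.choose (i+1) * stirling2 (i+1) t := by
      intro i _
      rw [Nat.choose_succ_succ, add_mul]
    rw [Finset.sum_congr rfl e1, Finset.sum_add_distrib]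
    have e2 : ∑ i ∈ range (n+1), n.choose (i+1) * stirling2 (i+1) t
        + (n+1).choose 0 * stirling2 0 t
        = stirling2 (n+1) (t+1) := by
      rw [← ih t, Finset.sum_range_succ' (fun j => n.choose j * stirling2 j t) n]
      simp only [Nat.choose_zero_right]
      rw [Finset.sum_range_succ]
      simp [Nat.choose_succ_self]
    rw [add_assoc, e2]
    cases t with
    | zero =>
      have hz : ∀ i ∈ range (n+1), n.choose i * stirling2 (i+1) 0 = 0 := by
        intro i _; rw [stirling2_zero_right (Nat.succ_pos i), mul_zero]
      rw [Finset.sum_congr rfl hz]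
      have : stirling2 (n+2) 1 = 1 * stirling2 (n+1) 1 + stirling2 (n+1) 0 := rfl
      rw [this, stirling2_zero_right (Nat.succ_pos n)]
      simp
    | succ t =>
      have e3 : ∀ i ∈ range (n+1),
          n.choose i * stirling2 (i+1) (t+1)
          = (t+1) * (n.choose i * stirling2 i (t+1)) + n.choose i * stirling2 i t := by
        intro i _
        have : stirling2 (i+1) (t+1) = (t+1) * stirling2 i (t+1) + stirling2 i t := rfl
        rw [this]; ring
      rw [Finset.sum_congr rfl e3, Finset.sum_add_distrib, ← Finset.mul_sum, ih, ih]
      have : stirling2 (n+2) (t+2) = (t+2) * stirling2 (n+1) (t+2) + stirling2 (n+1) (t+1) := rfl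
      rw [this]
      ring

open Finset in
lemma idC (n t : ℕ) : ∑ j ∈ range (n + 1), n.choose j * stirling2 (n + 1 - j) t
    = t * stirling2 (n + 1) (t + 1) + stirling2 (n + 1) t := by
  have hrefl := Finset.sum_range_reflect (fun j => n.choose j * stirling2 (n + 1 - j) t) (n+1)
  rw [← hrefl]
  have e1 : ∀ j ∈ range (n+1),
      n.choose (n + 1 - 1 - j) * stirling2 (n + 1 - (n + 1 - 1 - j)) t
      = n.choose j * stirling2 (j+1) t := by
    intro j hj
    have hj' : j ≤ n := by simp only [mem_range] at hj; omega
    have h1 : n + 1 - 1 - j = n - j := by omega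
    have h2 : n + 1 - (n - j) = j + 1 := by omega
    rw [h1, h2, Nat.choose_symm hj']
  rw [Finset.sum_congr rfl e1]
  cases t with
  | zero =>
    have hz : ∀ j ∈ range (n+1), n.choose j * stirling2 (j+1) 0 = 0 := by
      intro j _; rw [stirling2_zero_right (Nat.succ_pos j), mul_zero]
    rw [Finset.sum_congr rfl hz]
    simp [stirling2_zero_right (Nat.succ_pos n)]
  | succ t =>
    have e3 : ∀ j ∈ range (n+1),
        n.choose j * stirling2 (j+1) (t+1)
        = (t+1) * (n.choose j * stirling2 j (t+1)) + n.choose j * stirling2 j t := by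
      intro j _
      have : stirling2 (j+1) (t+1) = (t+1) * stirling2 j (t+1) + stirling2 j t := rfl
      rw [this]; ring
    rw [Finset.sum_congr rfl e3, Finset.sum_add_distrib, ← Finset.mul_sum, idD, idD]

open Finset in
lemma idW (a b j m : ℕ) :
    (∑ k ∈ range (a + 1), (a + b - k) * (a.choose k * stirling1 k (j+1) * stirling1 (a - k) m))
      + a * ((j + m).choose j * stirling1 a (j + 1 + m))
    = (a + b) * ((j + 1 + m).choose (j+1) * stirling1 a (j + 1 + m)) := by
  rw [← idB a j m, ← Finset.sum_add_distrib]
  have e : ∀ k ∈ range (a+1),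
      (a + b - k) * (a.choose k * stirling1 k (j+1) * stirling1 (a - k) m)
        + k * (a.choose k * stirling1 k (j+1) * stirling1 (a - k) m)
      = (a + b) * (a.choose k * stirling1 k (j+1) * stirling1 (a - k) m) := by
    intro k hk
    have : k ≤ a := by simp only [mem_range] at hk; omega
    rw [← add_mul]
    congr 1
    omega
  rw [Finset.sum_congr rfl e, ← Finset.mul_sum]
  have := idA a (j+1) m
  rw [this]

open Finset in
lemma keyNatAux (a b l t : ℕ) :
    ∑ j ∈ Icc 1 (l+1), stirling2 (l + 1 - j) t *
        ∑ k ∈ range (a + 1), (a + b - k) * (a.choose k * stirling1 k j * stirling1 (a - k) (l + 1 - j))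
    = stirling1 a (l+1) * stirling2 (l+1) (t + 1) * (b + (a + b) * t) := by
  have perj : ∀ j ∈ Icc 1 (l+1),
      stirling2 (l + 1 - j) t *
        (∑ k ∈ range (a + 1), (a + b - k) * (a.choose k * stirling1 k j * stirling1 (a - k) (l + 1 - j)))
      + a * (l.choose (j-1) * stirling2 (l + 1 - j) t) * stirling1 a (l+1)
      = (a + b) * ((l+1).choose j * stirling2 (l + 1 - j) t) * stirling1 a (l+1) := by
    intro j hj
    have hj1 : 1 ≤ j := (mem_Icc.mp hj).1
    have hjl : j ≤ l + 1 := (mem_Icc.mp hj).2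
    obtain ⟨j', rfl⟩ : ∃ j', j = j' + 1 := ⟨j - 1, by omega⟩
    have hw := idW a b j' (l + 1 - (j'+1))
    have h1 : j' + (l + 1 - (j'+1)) = l := by omega
    have h2 : j' + 1 + (l + 1 - (j'+1)) = l + 1 := by omega
    rw [h1, h2] at hw
    have h3 : j' + 1 - 1 = j' := by omega
    rw [h3]
    calc stirling2 (l + 1 - (j'+1)) t * (∑ k ∈ range (a + 1),
            (a + b - k) * (a.choose k * stirling1 k (j'+1) * stirling1 (a - k) (l + 1 - (j'+1))))
          + a * (l.choose j' * stirling2 (l + 1 - (j'+1)) t) * stirling1 a (l+1)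
        = ((∑ k ∈ range (a + 1),
            (a + b - k) * (a.choose k * stirling1 k (j'+1) * stirling1 (a - k) (l + 1 - (j'+1))))
          + a * (l.choose j' * stirling1 a (l+1))) * stirling2 (l + 1 - (j'+1)) t := by ring
      _ = ((a + b) * ((l+1).choose (j'+1) * stirling1 a (l+1))) * stirling2 (l + 1 - (j'+1)) t := by
          rw [hw]
      _ = (a + b) * ((l+1).choose (j'+1) * stirling2 (l + 1 - (j'+1)) t) * stirling1 a (l+1) := by
          ring
  have hsum := Finset.sum_congr rfl perj
  rw [Finset.sum_add_distrib, ← Finset.sum_mul, ← Finset.mul_sum, ← Finset.sum_mul,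
    ← Finset.mul_sum] at hsum
  have sum1 : ∑ j ∈ Icc 1 (l+1), l.choose (j-1) * stirling2 (l + 1 - j) t
      = stirling2 (l+1) (t+1) := by
    rw [sum_Icc_one (fun j => l.choose (j-1) * stirling2 (l + 1 - j) t) (l+1)]
    simp only [Nat.add_sub_cancel]
    have e : ∀ i ∈ range (l+1),
        l.choose i * stirling2 (l + 1 - (i+1)) t
        = l.choose (l + 1 - 1 - i) * stirling2 (l + 1 - 1 - i) t := by
      intro i hi
      have hi' : i ≤ l := by simp only [mem_range] at hi; omega
      have h1 : l + 1 - (i+1) = l + 1 - 1 - i := by omega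
      have h2 : l + 1 - 1 - i = l - i := by omega
      rw [h1, h2, Nat.choose_symm hi']
    rw [Finset.sum_congr rfl e,
      Finset.sum_range_reflect (fun i => l.choose i * stirling2 i t) (l+1), idD]
  have sum2 : ∑ j ∈ Icc 1 (l+1), (l+1).choose j * stirling2 (l + 1 - j) t
      = (t + 1) * stirling2 (l+1) (t+1) := by
    have e : ∀ j ∈ Icc 1 (l+1), (l+1).choose j * stirling2 (l + 1 - j) t
        = l.choose (j-1) * stirling2 (l + 1 - j) t + l.choose j * stirling2 (l + 1 - j) t := by
      intro j hj
      have hj1 : 1 ≤ j := (mem_Icc.mp hj).1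
      obtain ⟨j', rfl⟩ : ∃ j', j = j' + 1 := ⟨j - 1, by omega⟩
      simp only [Nat.add_sub_cancel]
      rw [Nat.choose_succ_succ, add_mul]
    rw [Finset.sum_congr rfl e, Finset.sum_add_distrib, sum1]
    have hC := idC l t
    have sum2b : stirling2 (l+1) t + ∑ j ∈ Icc 1 (l+1), l.choose j * stirling2 (l + 1 - j) t
        = t * stirling2 (l+1) (t+1) + stirling2 (l+1) t := by
      rw [← hC]
      rw [sum_Icc_one (fun j => l.choose j * stirling2 (l + 1 - j) t) (l+1)]
      have e2 : ∑ i ∈ range (l+1), l.choose (i+1) * stirling2 (l + 1 - (i+1)) t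
          = ∑ i ∈ range l, l.choose (i+1) * stirling2 (l + 1 - (i+1)) t := by
        rw [Finset.sum_range_succ]
        have hz : l.choose (l+1) = 0 := Nat.choose_eq_zero_of_lt (by omega)
        rw [hz, zero_mul, add_zero]
      rw [e2, Finset.sum_range_succ' (fun j => l.choose j * stirling2 (l + 1 - j) t) l]
      simp only [Nat.choose_zero_right, one_mul, Nat.sub_zero]
      omega
    have h2b : ∑ j ∈ Icc 1 (l+1), l.choose j * stirling2 (l + 1 - j) t
        = t * stirling2 (l+1) (t+1) := by omega
    rw [h2b]
    ring
  rw [sum1, sum2] at hsum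
  have hfin : (a + b) * ((t + 1) * stirling2 (l+1) (t+1)) * stirling1 a (l+1)
      = stirling1 a (l+1) * stirling2 (l+1) (t + 1) * (b + (a + b) * t)
        + a * stirling2 (l+1) (t+1) * stirling1 a (l+1) := by ring
  omega

open Finset in
lemma keyNat (a b l t : ℕ) (hl : 1 ≤ l) :
    ∑ j ∈ Icc 1 l, stirling2 (l - j) t *
        ∑ k ∈ range (a + 1), (a + b - k) * (a.choose k * stirling1 k j * stirling1 (a - k) (l - j))
    = stirling1 a l * stirling2 l (t + 1) * (b + (a + b) * t) := by
  obtain ⟨l', rfl⟩ : ∃ l', l = l' + 1 := ⟨l - 1, by omega⟩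
  exact keyNatAux a b l' t

open Finset in
lemma sum4_comm {s u : Finset ℕ} (f : ℕ → Finset ℕ) (g : ℕ → Finset ℕ) (F : ℕ → ℕ → ℕ → ℕ → ℝ) :
    ∑ x ∈ s, ∑ y ∈ f x, ∑ z ∈ u, ∑ w ∈ g z, F x y z w
      = ∑ z ∈ u, ∑ w ∈ g z, ∑ x ∈ s, ∑ y ∈ f x, F x y z w := by
  calc ∑ x ∈ s, ∑ y ∈ f x, ∑ z ∈ u, ∑ w ∈ g z, F x y z w
      = ∑ x ∈ s, ∑ z ∈ u, ∑ y ∈ f x, ∑ w ∈ g z, F x y z w :=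
        Finset.sum_congr rfl fun x _ => Finset.sum_comm
    _ = ∑ z ∈ u, ∑ x ∈ s, ∑ y ∈ f x, ∑ w ∈ g z, F x y z w := Finset.sum_comm
    _ = ∑ z ∈ u, ∑ x ∈ s, ∑ w ∈ g z, ∑ y ∈ f x, F x y z w :=
        Finset.sum_congr rfl fun z _ => Finset.sum_congr rfl fun x _ => Finset.sum_comm
    _ = ∑ z ∈ u, ∑ w ∈ g z, ∑ x ∈ s, ∑ y ∈ f x, F x y z w :=
        Finset.sum_congr rfl fun z _ => Finset.sum_comm

open Finset in
lemma sum3_comm {s u : Finset ℕ} (g : ℕ → Finset ℕ) (F : ℕ → ℕ → ℕ → ℝ) :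
    ∑ x ∈ s, ∑ z ∈ u, ∑ w ∈ g z, F x z w
      = ∑ z ∈ u, ∑ w ∈ g z, ∑ x ∈ s, F x z w := by
  calc ∑ x ∈ s, ∑ z ∈ u, ∑ w ∈ g z, F x z w
      = ∑ z ∈ u, ∑ x ∈ s, ∑ w ∈ g z, F x z w := Finset.sum_comm
    _ = ∑ z ∈ u, ∑ w ∈ g z, ∑ x ∈ s, F x z w :=
        Finset.sum_congr rfl fun z _ => Finset.sum_comm

open Finset in
lemma sum_reindex (N : ℕ) (f : ℕ → ℕ → ℝ) (hf : ∀ j m, 1 ≤ j → N < j + m → f j m = 0) :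
    ∑ j ∈ Icc 1 N, ∑ m ∈ range (N + 1), f j m
      = ∑ l ∈ Icc 1 N, ∑ j ∈ Icc 1 l, f j (l - j) := by
  rw [← Finset.sum_product']
  rw [Finset.sum_sigma' (Icc 1 N) (fun l => Icc 1 l) (fun l j => f j (l - j))]
  rw [← Finset.sum_filter_add_sum_filter_not ((Icc 1 N) ×ˢ (range (N+1)))
    (fun p => p.1 + p.2 ≤ N)]
  have h2 : ∑ p ∈ ((Icc 1 N) ×ˢ (range (N+1))).filter (fun p => ¬ p.1 + p.2 ≤ N),
      f p.1 p.2 = 0 := by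
    refine Finset.sum_eq_zero fun p hp => ?_
    simp only [mem_filter, mem_product, mem_Icc, mem_range] at hp
    exact hf p.1 p.2 hp.1.1.1 (by omega)
  rw [h2, add_zero]
  refine Finset.sum_nbij' (fun p => ⟨p.1 + p.2, p.1⟩) (fun q => (q.2, q.1 - q.2)) ?_ ?_ ?_ ?_ ?_
  · intro p hp
    simp only [mem_filter, mem_product, mem_Icc, mem_range] at hp
    simp only [Finset.mem_sigma, mem_Icc]
    omega
  · intro q hq
    simp only [Finset.mem_sigma, mem_Icc] at hq
    simp only [mem_filter, mem_product, mem_Icc, mem_range]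
    omega
  · intro p hp
    simp only [mem_filter, mem_product, mem_Icc, mem_range] at hp
    simp only [Nat.add_sub_cancel_left]
  · intro q hq
    simp only [Finset.mem_sigma, mem_Icc] at hq
    have : q.2 + (q.1 - q.2) = q.1 := by omega
    simp [this]
  · intro p hp
    simp only [Nat.add_sub_cancel_left]

lemma coef_eq (a b k : ℕ) (hk1 : 1 ≤ k) (hka : k ≤ a) (hb : 1 ≤ b) :
    (a.choose k : ℝ) / ((a + b).choose k : ℝ) / (k.factorial : ℝ) /
        (((a - k) + b - 1).factorial : ℝ)
      = ((a.choose k * (a + b - k) : ℕ) : ℝ) / ((a + b).factorial : ℝ) := by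
  have hk' : k ≤ a + b := by omega
  have h1 : ((a + b).choose k) * k.factorial * (a + b - k).factorial = (a + b).factorial :=
    Nat.choose_mul_factorial_mul_factorial hk'
  have h2 : (a - k) + b - 1 = (a + b - k) - 1 := by omega
  have h3 : (a + b - k) * ((a + b - k) - 1).factorial = (a + b - k).factorial :=
    Nat.mul_factorial_pred (by omega)
  have hc : ((a + b).choose k : ℝ) ≠ 0 := by
    exact_mod_cast (Nat.choose_pos hk').ne'
  have hf1 : (k.factorial : ℝ) ≠ 0 := by exact_mod_cast k.factorial_ne_zero
  rw [h2]
  rw [div_eq_div_iff (by positivity) (by positivity)]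
  push_cast [← h1, ← h3]
  field_simp

open Finset in
noncomputable def Phi (ν β₁ : ℝ) (b k₂ : ℕ) (n : ℕ) : ℝ :=
  if n = 0 then (-1 : ℝ) ^ (k₂ - 1) * (((k₂ - 1).factorial : ℝ) / ((b - 1).factorial : ℝ))
  else ∑ m ∈ Icc 1 n, ∑ t ∈ Icc 1 m,
    (-1 : ℝ) ^ (t + k₂ - 1) * (((t + k₂ - 1).factorial : ℝ) / ((n + b - 1).factorial : ℝ)) *
      (stirling1 n m : ℝ) * (stirling2 m t : ℝ) * ν ^ m * β₁ ^ t

open Finset in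
lemma F_fact (ν β₁ β₂ : ℝ) (b' : ℕ) (n : ℕ) :
    besselF ν β₁ β₂ n (b' + 1) = ∑ l₂ ∈ Icc 1 (b' + 1), ∑ k₂ ∈ Icc 1 l₂,
      (stirling1 (b' + 1) l₂ : ℝ) * (stirling2 l₂ k₂ : ℝ) * ν ^ (l₂ - 1) * β₂ ^ k₂ *
        Phi ν β₁ (b' + 1) k₂ n := by
  cases n with
  | zero =>
    show (∑ l ∈ Finset.Icc 1 (b' + 1), ∑ k ∈ Finset.Icc 1 l,
        (-1 : ℝ) ^ (k - 1) * (((k - 1).factorial : ℝ) / (((b' + 1) - 1).factorial : ℝ)) *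
          (stirling1 (b' + 1) l : ℝ) * (stirling2 l k : ℝ) * ν ^ (l - 1) * β₂ ^ k) = _
    refine Finset.sum_congr rfl fun l _ => Finset.sum_congr rfl fun k _ => ?_
    rw [Phi]
    simp only [reduceIte]
    ring
  | succ n =>
    show (∑ l₁ ∈ Finset.Icc 1 (n + 1), ∑ k₁ ∈ Finset.Icc 1 l₁,
        ∑ l₂ ∈ Finset.Icc 1 (b' + 1), ∑ k₂ ∈ Finset.Icc 1 l₂,
          (-1 : ℝ) ^ (k₁ + k₂ - 1) *
            (((k₁ + k₂ - 1).factorial : ℝ) / (((n + 1) + (b' + 1) - 1).factorial : ℝ)) *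
            (stirling1 (n + 1) l₁ : ℝ) * (stirling2 l₁ k₁ : ℝ) *
            (stirling1 (b' + 1) l₂ : ℝ) * (stirling2 l₂ k₂ : ℝ) *
            ν ^ (l₁ + l₂ - 1) * β₁ ^ k₁ * β₂ ^ k₂) = _
    rw [sum4_comm]
    refine Finset.sum_congr rfl fun l₂ hl₂ => Finset.sum_congr rfl fun k₂ hk₂ => ?_
    rw [Phi]
    simp only [Nat.succ_ne_zero, if_false]
    rw [Finset.mul_sum]
    refine Finset.sum_congr rfl fun m hm => ?_
    rw [Finset.mul_sum]
    refine Finset.sum_congr rfl fun t ht => ?_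
    have hl₂1 : 1 ≤ l₂ := (mem_Icc.mp hl₂).1
    have hm1 : 1 ≤ m := (mem_Icc.mp hm).1
    have hpow : ν ^ (m + l₂ - 1) = ν ^ m * ν ^ (l₂ - 1) := by
      rw [← pow_add]
      congr 1
      omega
    have hfac : (n + 1) + (b' + 1) - 1 = (n + 1) + (b' + 1) - 1 := rfl
    rw [hpow]
    have h2 : (n + 1) + (b' + 1) - 1 = (n + 1) + (b' + 1) - 1 := rfl
    ring

open Finset in
lemma term_eq (ν β₁ : ℝ) (a b k₂ k : ℕ) (hb : 1 ≤ b) (hk₂ : 1 ≤ k₂)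
    (hk1 : 1 ≤ k) (hka : k ≤ a) :
    ((a.choose k : ℝ) / ((a + b).choose k : ℝ)) * besselD ν k β₁ * Phi ν β₁ b k₂ (a - k)
      = ∑ j ∈ Icc 1 a, ∑ m ∈ range (a + 1), ∑ t ∈ range (a + 1),
          (-1 : ℝ) ^ (t + k₂) * (((t + k₂ - 1).factorial : ℝ) / ((a + b).factorial : ℝ)) *
            ν ^ (j + m) * β₁ ^ (t + 1) * (stirling2 m t : ℝ) *
            (((a + b - k) * (a.choose k * (stirling1 k j * stirling1 (a - k) m)) : ℕ) : ℝ) := by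
  symm
  have hshrink : ∀ N : ℕ, N ≤ a → (∀ m, N < m → stirling1 (a - k) m = 0) →
      (∑ j ∈ Icc 1 a, ∑ m ∈ range (a + 1), ∑ t ∈ range (a + 1),
          (-1 : ℝ) ^ (t + k₂) * (((t + k₂ - 1).factorial : ℝ) / ((a + b).factorial : ℝ)) *
            ν ^ (j + m) * β₁ ^ (t + 1) * (stirling2 m t : ℝ) *
            (((a + b - k) * (a.choose k * (stirling1 k j * stirling1 (a - k) m)) : ℕ) : ℝ))
      = ∑ j ∈ Icc 1 k, ∑ m ∈ range (N + 1), ∑ t ∈ range (a + 1),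
          (-1 : ℝ) ^ (t + k₂) * (((t + k₂ - 1).factorial : ℝ) / ((a + b).factorial : ℝ)) *
            ν ^ (j + m) * β₁ ^ (t + 1) * (stirling2 m t : ℝ) *
            (((a + b - k) * (a.choose k * (stirling1 k j * stirling1 (a - k) m)) : ℕ) : ℝ) := by
    intro N hN hNz
    rw [← Finset.sum_subset (Finset.Icc_subset_Icc le_rfl hka)]
    · refine Finset.sum_congr rfl fun j _ => ?_
      rw [← Finset.sum_subset (Finset.range_subset_range.mpr (by omega : N + 1 ≤ a + 1))]
      intro m _ hm
      have : stirling1 (a - k) m = 0 := hNz m (by simp only [mem_range] at hm ⊢; omega)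
      refine Finset.sum_eq_zero fun t _ => ?_
      rw [this]
      push_cast
      ring
    · intro j hj hj'
      have : stirling1 k j = 0 := by
        refine stirling1_eq_zero_of_lt ?_
        simp only [mem_Icc] at hj hj'
        omega
      refine Finset.sum_eq_zero fun m _ => Finset.sum_eq_zero fun t _ => ?_
      rw [this]
      push_cast
      ring
  rcases Nat.lt_or_ge k a with hlt | hge
  · -- k < a
    have hak : 1 ≤ a - k := by omega
    rw [hshrink (a - k) (by omega) (fun m hm => stirling1_eq_zero_of_lt hm)]
    rw [Phi, if_neg (by omega), besselD]
    have hcoef := coef_eq a b k hk1 hka hb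
    have hX : ((a.choose k : ℝ) / ((a + b).choose k : ℝ)) *
        (-(β₁ / (k.factorial : ℝ)) * ∑ j ∈ Icc 1 k, (stirling1 k j : ℝ) * ν ^ j)
        = ∑ j ∈ Icc 1 k, ((a.choose k : ℝ) / ((a + b).choose k : ℝ)) *
            (-(β₁ / (k.factorial : ℝ)) * ((stirling1 k j : ℝ) * ν ^ j)) := by
      rw [Finset.mul_sum, Finset.mul_sum]
    rw [hX, Finset.sum_mul]
    refine Finset.sum_congr rfl fun j hj => ?_
    -- reduce m-range on LHS
    have hmsub : (∑ m ∈ range (a - k + 1), ∑ t ∈ range (a + 1),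
          (-1 : ℝ) ^ (t + k₂) * (((t + k₂ - 1).factorial : ℝ) / ((a + b).factorial : ℝ)) *
            ν ^ (j + m) * β₁ ^ (t + 1) * (stirling2 m t : ℝ) *
            (((a + b - k) * (a.choose k * (stirling1 k j * stirling1 (a - k) m)) : ℕ) : ℝ))
        = ∑ m ∈ Icc 1 (a - k), ∑ t ∈ Icc 1 m,
          (-1 : ℝ) ^ (t + k₂) * (((t + k₂ - 1).factorial : ℝ) / ((a + b).factorial : ℝ)) *
            ν ^ (j + m) * β₁ ^ (t + 1) * (stirling2 m t : ℝ) *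
            (((a + b - k) * (a.choose k * (stirling1 k j * stirling1 (a - k) m)) : ℕ) : ℝ) := by
      rw [show range (a - k + 1) = Icc 0 (a - k) by rw [← Finset.Ico_add_one_right_eq_Icc, Nat.Ico_zero_eq_range]]
      rw [← Finset.sum_subset (Finset.Icc_subset_Icc (by omega : (0:ℕ) ≤ 1) le_rfl)]
      · refine Finset.sum_congr rfl fun m hm => ?_
        have hm1 : 1 ≤ m := (mem_Icc.mp hm).1
        have hma : m ≤ a - k := (mem_Icc.mp hm).2
        rw [← Finset.sum_subset (show Icc 1 m ⊆ range (a + 1) by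
          intro t ht
          simp only [mem_Icc] at ht
          simp only [mem_range]
          omega)]
        intro t ht ht'
        have : stirling2 m t = 0 := by
          rcases Nat.eq_zero_or_pos t with rfl | htpos
          · exact stirling2_zero_right hm1
          · refine stirling2_eq_zero_of_lt ?_
            simp only [mem_Icc, not_and, not_le] at ht'
            omega
        rw [this]
        push_cast
        ring
      · intro m hm hm'
        have hm0 : m = 0 := by
          simp only [mem_Icc] at hm hm'
          omega
        subst hm0
        refine Finset.sum_eq_zero fun t _ => ?_
        rw [stirling1_zero_right hak]
        push_cast
        ring
    rw [hmsub, Finset.mul_sum]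
    refine Finset.sum_congr rfl fun m hm => ?_
    rw [Finset.mul_sum]
    refine Finset.sum_congr rfl fun t ht => ?_
    have hm1 : 1 ≤ m := (mem_Icc.mp hm).1
    have ht1 : 1 ≤ t := (mem_Icc.mp ht).1
    calc (-1 : ℝ) ^ (t + k₂) * (((t + k₂ - 1).factorial : ℝ) / ((a + b).factorial : ℝ)) *
            ν ^ (j + m) * β₁ ^ (t + 1) * (stirling2 m t : ℝ) *
            (((a + b - k) * (a.choose k * (stirling1 k j * stirling1 (a - k) m)) : ℕ) : ℝ)
        = ((-1 : ℝ) ^ (t + k₂)) * (((a.choose k * (a + b - k) : ℕ) : ℝ) / ((a + b).factorial : ℝ)) *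
            ((t + k₂ - 1).factorial : ℝ) * ν ^ (j + m) * β₁ ^ (t + 1) * (stirling2 m t : ℝ) *
            (stirling1 k j : ℝ) * (stirling1 (a - k) m : ℝ) := by
          push_cast
          ring
      _ = ((-1 : ℝ) ^ (t + k₂)) * ((a.choose k : ℝ) / ((a + b).choose k : ℝ) / (k.factorial : ℝ) /
            (((a - k) + b - 1).factorial : ℝ)) *
            ((t + k₂ - 1).factorial : ℝ) * ν ^ (j + m) * β₁ ^ (t + 1) * (stirling2 m t : ℝ) *
            (stirling1 k j : ℝ) * (stirling1 (a - k) m : ℝ) := by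
          rw [hcoef]
      _ = (a.choose k : ℝ) / ((a + b).choose k : ℝ) *
            (-(β₁ / (k.factorial : ℝ)) * ((stirling1 k j : ℝ) * ν ^ j)) *
            ((-1 : ℝ) ^ (t + k₂ - 1) *
              (((t + k₂ - 1).factorial : ℝ) / (((a - k) + b - 1).factorial : ℝ)) *
              (stirling1 (a - k) m : ℝ) * (stirling2 m t : ℝ) * ν ^ m * β₁ ^ t) := by
          rw [show t + k₂ = (t + k₂ - 1) + 1 by omega, pow_succ, pow_add ν j m, pow_succ β₁ t]
          ring_nf
          simp only [Nat.add_sub_cancel_left]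
  · -- k = a
    have hk : k = a := by omega
    subst hk
    rw [hshrink 0 (by omega) (fun m hm => by
      rw [Nat.sub_self]
      exact stirling1_eq_zero_of_lt hm)]
    rw [Nat.sub_self, Phi, if_pos rfl, besselD]
    have e2 : k + b - k = b := by omega
    rw [e2]
    have hX : ((k.choose k : ℝ) / ((k + b).choose k : ℝ)) *
        (-(β₁ / (k.factorial : ℝ)) * ∑ j ∈ Icc 1 k, (stirling1 k j : ℝ) * ν ^ j)
        = ∑ j ∈ Icc 1 k, ((k.choose k : ℝ) / ((k + b).choose k : ℝ)) *
            (-(β₁ / (k.factorial : ℝ)) * ((stirling1 k j : ℝ) * ν ^ j)) := by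
      rw [Finset.mul_sum, Finset.mul_sum]
    rw [hX, Finset.sum_mul]
    refine Finset.sum_congr rfl fun j hj => ?_
    rw [Finset.sum_range_one]
    rw [Finset.sum_eq_single_of_mem 0 (by simp)]
    · have hcoef := coef_eq k b k hk1 le_rfl hb
      rw [Nat.sub_self] at hcoef
      have e1 : (0 : ℕ) + b - 1 = b - 1 := by omega
      rw [e1, e2] at hcoef
      calc (-1 : ℝ) ^ (0 + k₂) * (((0 + k₂ - 1).factorial : ℝ) / ((k + b).factorial : ℝ)) *
              ν ^ (j + 0) * β₁ ^ (0 + 1) * (stirling2 0 0 : ℝ) *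
              ((b * (k.choose k * (stirling1 k j * stirling1 0 0)) : ℕ) : ℝ)
          = ((-1 : ℝ) ^ k₂) * (((k.choose k * b : ℕ) : ℝ) / ((k + b).factorial : ℝ)) *
              ((k₂ - 1).factorial : ℝ) * ν ^ j * β₁ * (stirling1 k j : ℝ) := by
            have hs1 : stirling2 0 0 = 1 := rfl
            have hs2 : stirling1 0 0 = 1 := rfl
            rw [hs1, hs2]
            push_cast
            ring_nf
      _ = ((-1 : ℝ) ^ k₂) * ((k.choose k : ℝ) / ((k + b).choose k : ℝ) / (k.factorial : ℝ) /
              ((b - 1).factorial : ℝ)) *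
              ((k₂ - 1).factorial : ℝ) * ν ^ j * β₁ * (stirling1 k j : ℝ) := by
            rw [hcoef]
      _ = (k.choose k : ℝ) / ((k + b).choose k : ℝ) *
              (-(β₁ / (k.factorial : ℝ)) * ((stirling1 k j : ℝ) * ν ^ j)) *
              ((-1 : ℝ) ^ (k₂ - 1) * (((k₂ - 1).factorial : ℝ) / ((b - 1).factorial : ℝ))) := by
            rw [show k₂ = (k₂ - 1) + 1 by omega, pow_succ]
            ring_nf
            simp only [Nat.add_sub_cancel_left]
    · intro t _ ht
      have : stirling2 0 t = 0 := stirling2_eq_zero_of_lt (by omega)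
      rw [this]
      push_cast
      ring

open Finset in
lemma sum4_perm {s1 s2 s3 s4 : Finset ℕ} (F : ℕ → ℕ → ℕ → ℕ → ℝ) :
    ∑ k ∈ s1, ∑ j ∈ s2, ∑ m ∈ s3, ∑ t ∈ s4, F k j m t
      = ∑ t ∈ s4, ∑ j ∈ s2, ∑ m ∈ s3, ∑ k ∈ s1, F k j m t := by
  calc ∑ k ∈ s1, ∑ j ∈ s2, ∑ m ∈ s3, ∑ t ∈ s4, F k j m t
      = ∑ j ∈ s2, ∑ k ∈ s1, ∑ m ∈ s3, ∑ t ∈ s4, F k j m t := Finset.sum_comm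
    _ = ∑ j ∈ s2, ∑ m ∈ s3, ∑ k ∈ s1, ∑ t ∈ s4, F k j m t :=
        Finset.sum_congr rfl fun j _ => Finset.sum_comm
    _ = ∑ j ∈ s2, ∑ m ∈ s3, ∑ t ∈ s4, ∑ k ∈ s1, F k j m t :=
        Finset.sum_congr rfl fun j _ => Finset.sum_congr rfl fun m _ => Finset.sum_comm
    _ = ∑ j ∈ s2, ∑ t ∈ s4, ∑ m ∈ s3, ∑ k ∈ s1, F k j m t :=
        Finset.sum_congr rfl fun j _ => Finset.sum_comm
    _ = ∑ t ∈ s4, ∑ j ∈ s2, ∑ m ∈ s3, ∑ k ∈ s1, F k j m t := Finset.sum_comm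

open Finset in
lemma X_eq_Z (ν β₁ : ℝ) (a b k₂ : ℕ) (ha : 1 ≤ a) (hb : 1 ≤ b) (hk₂ : 1 ≤ k₂) :
    ∑ k ∈ Icc 1 a, ((a.choose k : ℝ) / ((a + b).choose k : ℝ)) * besselD ν k β₁ *
        Phi ν β₁ b k₂ (a - k)
      = ∑ t ∈ range (a + 1), ∑ l ∈ Icc 1 a,
          (-1 : ℝ) ^ (t + k₂) * (((t + k₂ - 1).factorial : ℝ) / ((a + b).factorial : ℝ)) *
            ν ^ l * β₁ ^ (t + 1) *
            ((stirling1 a l * stirling2 l (t + 1) * (b + (a + b) * t) : ℕ) : ℝ) := by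
  rw [Finset.sum_congr rfl fun k hk =>
    term_eq ν β₁ a b k₂ k hb hk₂ (mem_Icc.mp hk).1 (mem_Icc.mp hk).2]
  rw [sum4_perm]
  refine Finset.sum_congr rfl fun t _ => ?_
  have hinner : ∀ j ∈ Icc 1 a, ∀ m ∈ range (a + 1),
      (∑ k ∈ Icc 1 a,
        (-1 : ℝ) ^ (t + k₂) * (((t + k₂ - 1).factorial : ℝ) / ((a + b).factorial : ℝ)) *
          ν ^ (j + m) * β₁ ^ (t + 1) * (stirling2 m t : ℝ) *
          (((a + b - k) * (a.choose k * (stirling1 k j * stirling1 (a - k) m)) : ℕ) : ℝ))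
      = (-1 : ℝ) ^ (t + k₂) * (((t + k₂ - 1).factorial : ℝ) / ((a + b).factorial : ℝ)) *
          ν ^ (j + m) * β₁ ^ (t + 1) *
          ((stirling2 m t *
            ∑ k ∈ range (a + 1), (a + b - k) * (a.choose k * stirling1 k j * stirling1 (a - k) m)
              : ℕ) : ℝ) := by
    intro j hj m _
    have hj1 : 1 ≤ j := (mem_Icc.mp hj).1
    have hicc : ∑ k ∈ Icc 1 a,
        (-1 : ℝ) ^ (t + k₂) * (((t + k₂ - 1).factorial : ℝ) / ((a + b).factorial : ℝ)) *
          ν ^ (j + m) * β₁ ^ (t + 1) * (stirling2 m t : ℝ) *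
          (((a + b - k) * (a.choose k * (stirling1 k j * stirling1 (a - k) m)) : ℕ) : ℝ)
        = ∑ k ∈ range (a + 1),
        (-1 : ℝ) ^ (t + k₂) * (((t + k₂ - 1).factorial : ℝ) / ((a + b).factorial : ℝ)) *
          ν ^ (j + m) * β₁ ^ (t + 1) * (stirling2 m t : ℝ) *
          (((a + b - k) * (a.choose k * (stirling1 k j * stirling1 (a - k) m)) : ℕ) : ℝ) := by
      rw [show range (a + 1) = Icc 0 a by rw [← Finset.Ico_add_one_right_eq_Icc, Nat.Ico_zero_eq_range]]
      rw [← Finset.sum_subset (Finset.Icc_subset_Icc (by omega : (0:ℕ) ≤ 1) le_rfl)]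
      intro k hk hk'
      have hk0 : k = 0 := by
        simp only [mem_Icc] at hk hk'
        omega
      subst hk0
      rw [stirling1_eq_zero_of_lt (by omega : (0:ℕ) < j)]
      push_cast
      ring
    rw [hicc]
    simp only [Nat.cast_mul, Nat.cast_sum, Finset.mul_sum]
    refine Finset.sum_congr rfl fun k _ => ?_
    push_cast
    ring
  rw [Finset.sum_congr rfl fun j hj => Finset.sum_congr rfl fun m hm => hinner j hj m hm]
  rw [sum_reindex a _ (fun j m hj hjm => by
    have hz : ∀ k ∈ range (a + 1),
        (a + b - k) * (a.choose k * stirling1 k j * stirling1 (a - k) m) = 0 := by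
      intro k hk
      simp only [mem_range] at hk
      rcases Nat.lt_or_ge k j with h | h
      · rw [stirling1_eq_zero_of_lt h]
        ring
      · rw [stirling1_eq_zero_of_lt (show a - k < m by omega)]
        ring
    rw [Finset.sum_eq_zero hz]
    push_cast
    ring)]
  refine Finset.sum_congr rfl fun l hl => ?_
  have hl1 : 1 ≤ l := (mem_Icc.mp hl).1
  have hstep : ∀ j ∈ Icc 1 l,
      (-1 : ℝ) ^ (t + k₂) * (((t + k₂ - 1).factorial : ℝ) / ((a + b).factorial : ℝ)) *
          ν ^ (j + (l - j)) * β₁ ^ (t + 1) *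
          ((stirling2 (l - j) t *
            ∑ k ∈ range (a + 1), (a + b - k) * (a.choose k * stirling1 k j * stirling1 (a - k) (l - j))
              : ℕ) : ℝ)
      = (-1 : ℝ) ^ (t + k₂) * (((t + k₂ - 1).factorial : ℝ) / ((a + b).factorial : ℝ)) *
          ν ^ l * β₁ ^ (t + 1) *
          ((stirling2 (l - j) t *
            ∑ k ∈ range (a + 1), (a + b - k) * (a.choose k * stirling1 k j * stirling1 (a - k) (l - j))
              : ℕ) : ℝ) := by
    intro j hj
    have : j + (l - j) = l := by
      have := (mem_Icc.mp hj).2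
      omega
    rw [this]
  rw [Finset.sum_congr rfl hstep, ← Finset.mul_sum, ← Nat.cast_sum, keyNat a b l t hl1]

open Finset in
lemma Z_eq_Y (ν β₁ : ℝ) (a b k₂ : ℕ) (hk₂ : 1 ≤ k₂) :
    (∑ t ∈ range (a + 1), ∑ l ∈ Icc 1 a,
        (-1 : ℝ) ^ (t + k₂) * (((t + k₂ - 1).factorial : ℝ) / ((a + b).factorial : ℝ)) *
          ν ^ l * β₁ ^ (t + 1) *
          ((stirling1 a l * stirling2 l (t + 1) * (b + (a + b) * t) : ℕ) : ℝ))
      = ∑ l ∈ Icc 1 a, ∑ k₁ ∈ Icc 1 l,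
          (-1 : ℝ) ^ (k₁ + k₂ - 1) * (((k₁ + k₂ - 2).factorial : ℝ) / ((a + b).factorial : ℝ)) *
            (stirling1 a l : ℝ) * (stirling2 l k₁ : ℝ) * ν ^ l * β₁ ^ k₁ *
            ((b : ℝ) + ((a : ℝ) + (b : ℝ)) * ((k₁ - 1 : ℕ) : ℝ)) := by
  rw [Finset.sum_comm]
  refine Finset.sum_congr rfl fun l hl => ?_
  have hla : l ≤ a := (mem_Icc.mp hl).2
  rw [sum_Icc_one (fun k₁ => (-1 : ℝ) ^ (k₁ + k₂ - 1) *
      (((k₁ + k₂ - 2).factorial : ℝ) / ((a + b).factorial : ℝ)) *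
      (stirling1 a l : ℝ) * (stirling2 l k₁ : ℝ) * ν ^ l * β₁ ^ k₁ *
      ((b : ℝ) + ((a : ℝ) + (b : ℝ)) * ((k₁ - 1 : ℕ) : ℝ))) l]
  rw [← Finset.sum_subset (Finset.range_subset_range.mpr (by omega : l ≤ a + 1))]
  · refine Finset.sum_congr rfl fun t _ => ?_
    have h1 : t + 1 + k₂ - 1 = t + k₂ := by omega
    have h2 : t + 1 + k₂ - 2 = t + k₂ - 1 := by omega
    have h3 : t + 1 - 1 = t := by omega
    rw [h1, h2, h3]
    push_cast
    ring
  · intro t ht ht'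
    have : stirling2 l (t + 1) = 0 := by
      refine stirling2_eq_zero_of_lt ?_
      simp only [mem_range] at ht ht'
      omega
    rw [this]
    push_cast
    ring

/-- Evaluation of the first-leg half of the recursion (Appendix A): for
`a, b ≥ 1`,
`∑_{k=1}^{a} (C(a,k)/C(a+b,k)) D_k(β₁) F(a-k, b)
  = ∑_{l₁=1}^{a} ∑_{k₁=1}^{l₁} ∑_{l₂=1}^{b} ∑_{k₂=1}^{l₂} (-1)^{k₁+k₂-1}
      ((k₁+k₂-2)!/(a+b)!) c(a,l₁) S(l₁,k₁) c(b,l₂) S(l₂,k₂)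
      ν^{l₁+l₂-1} β₁^{k₁} β₂^{k₂} (b + (a+b)(k₁-1))`. -/
theorem besselF_first_leg_sum_evaluation (ν β₁ β₂ : ℝ) (a b : ℕ)
    (ha : 1 ≤ a) (hb : 1 ≤ b) :
    (∑ k ∈ Finset.Icc 1 a,
        ((a.choose k : ℝ) / ((a + b).choose k : ℝ)) * besselD ν k β₁ *
          besselF ν β₁ β₂ (a - k) b)
      = ∑ l₁ ∈ Finset.Icc 1 a, ∑ k₁ ∈ Finset.Icc 1 l₁,
          ∑ l₂ ∈ Finset.Icc 1 b, ∑ k₂ ∈ Finset.Icc 1 l₂,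
            (-1 : ℝ) ^ (k₁ + k₂ - 1) *
              (((k₁ + k₂ - 2).factorial : ℝ) / ((a + b).factorial : ℝ)) *
              (stirling1 a l₁ : ℝ) * (stirling2 l₁ k₁ : ℝ) *
              (stirling1 b l₂ : ℝ) * (stirling2 l₂ k₂ : ℝ) *
              ν ^ (l₁ + l₂ - 1) * β₁ ^ k₁ * β₂ ^ k₂ *
              ((b : ℝ) + ((a : ℝ) + (b : ℝ)) * ((k₁ - 1 : ℕ) : ℝ)) := by
  obtain ⟨b', rfl⟩ : ∃ b', b = b' + 1 := ⟨b - 1, by omega⟩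
  open Finset in
  calc (∑ k ∈ Finset.Icc 1 a,
        ((a.choose k : ℝ) / ((a + (b' + 1)).choose k : ℝ)) * besselD ν k β₁ *
          besselF ν β₁ β₂ (a - k) (b' + 1))
      = ∑ k ∈ Icc 1 a, ∑ l₂ ∈ Icc 1 (b' + 1), ∑ k₂ ∈ Icc 1 l₂,
          ((stirling1 (b' + 1) l₂ : ℝ) * (stirling2 l₂ k₂ : ℝ) * ν ^ (l₂ - 1) * β₂ ^ k₂) *
            (((a.choose k : ℝ) / ((a + (b' + 1)).choose k : ℝ)) * besselD ν k β₁ *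
              Phi ν β₁ (b' + 1) k₂ (a - k)) := by
        refine Finset.sum_congr rfl fun k _ => ?_
        rw [F_fact ν β₁ β₂ b' (a - k), Finset.mul_sum]
        refine Finset.sum_congr rfl fun l₂ _ => ?_
        rw [Finset.mul_sum]
        refine Finset.sum_congr rfl fun k₂ _ => ?_
        ring
    _ = ∑ l₂ ∈ Icc 1 (b' + 1), ∑ k₂ ∈ Icc 1 l₂, ∑ k ∈ Icc 1 a,
          ((stirling1 (b' + 1) l₂ : ℝ) * (stirling2 l₂ k₂ : ℝ) * ν ^ (l₂ - 1) * β₂ ^ k₂) *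
            (((a.choose k : ℝ) / ((a + (b' + 1)).choose k : ℝ)) * besselD ν k β₁ *
              Phi ν β₁ (b' + 1) k₂ (a - k)) :=
        sum3_comm _ _
    _ = ∑ l₂ ∈ Icc 1 (b' + 1), ∑ k₂ ∈ Icc 1 l₂,
          ((stirling1 (b' + 1) l₂ : ℝ) * (stirling2 l₂ k₂ : ℝ) * ν ^ (l₂ - 1) * β₂ ^ k₂) *
            (∑ k ∈ Icc 1 a, ((a.choose k : ℝ) / ((a + (b' + 1)).choose k : ℝ)) * besselD ν k β₁ *
              Phi ν β₁ (b' + 1) k₂ (a - k)) := by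
        refine Finset.sum_congr rfl fun l₂ _ => Finset.sum_congr rfl fun k₂ _ => ?_
        rw [Finset.mul_sum]
    _ = ∑ l₂ ∈ Icc 1 (b' + 1), ∑ k₂ ∈ Icc 1 l₂,
          ((stirling1 (b' + 1) l₂ : ℝ) * (stirling2 l₂ k₂ : ℝ) * ν ^ (l₂ - 1) * β₂ ^ k₂) *
            (∑ l ∈ Icc 1 a, ∑ k₁ ∈ Icc 1 l,
              (-1 : ℝ) ^ (k₁ + k₂ - 1) *
                (((k₁ + k₂ - 2).factorial : ℝ) / ((a + (b' + 1)).factorial : ℝ)) *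
                (stirling1 a l : ℝ) * (stirling2 l k₁ : ℝ) * ν ^ l * β₁ ^ k₁ *
                ((b' + 1 : ℝ) + ((a : ℝ) + (b' + 1 : ℝ)) * ((k₁ - 1 : ℕ) : ℝ))) := by
        refine Finset.sum_congr rfl fun l₂ _ => Finset.sum_congr rfl fun k₂ hk₂ => ?_
        have hk₂1 : 1 ≤ k₂ := (mem_Icc.mp hk₂).1
        rw [X_eq_Z ν β₁ a (b' + 1) k₂ ha hb hk₂1, Z_eq_Y ν β₁ a (b' + 1) k₂ hk₂1]
        congr 2
        push_cast
        ring
    _ = ∑ l₁ ∈ Finset.Icc 1 a, ∑ k₁ ∈ Finset.Icc 1 l₁,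
          ∑ l₂ ∈ Finset.Icc 1 (b' + 1), ∑ k₂ ∈ Finset.Icc 1 l₂,
            (-1 : ℝ) ^ (k₁ + k₂ - 1) *
              (((k₁ + k₂ - 2).factorial : ℝ) / ((a + (b' + 1)).factorial : ℝ)) *
              (stirling1 a l₁ : ℝ) * (stirling2 l₁ k₁ : ℝ) *
              (stirling1 (b' + 1) l₂ : ℝ) * (stirling2 l₂ k₂ : ℝ) *
              ν ^ (l₁ + l₂ - 1) * β₁ ^ k₁ * β₂ ^ k₂ *
              (((b' + 1 : ℕ) : ℝ) + ((a : ℝ) + ((b' + 1 : ℕ) : ℝ)) * ((k₁ - 1 : ℕ) : ℝ)) := by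
        rw [sum4_comm]
        refine Finset.sum_congr rfl fun l₂ hl₂ => Finset.sum_congr rfl fun k₂ _ => ?_
        rw [Finset.mul_sum]
        refine Finset.sum_congr rfl fun l₁ hl₁ => ?_
        rw [Finset.mul_sum]
        refine Finset.sum_congr rfl fun k₁ _ => ?_
        have hl₂1 : 1 ≤ l₂ := (mem_Icc.mp hl₂).1
        have hpow : ν ^ (l₁ + l₂ - 1) = ν ^ l₁ * ν ^ (l₂ - 1) := by
          rw [← pow_add]
          congr 1
          omega
        rw [hpow]
        push_cast
        ring
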